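/- If the QFI of a mixed state ρ is defined by the convex roof F_Q[ρ;H] = inf over ensembles {p_i, |ψ_i⟩} with Σ p_i|ψ_i⟩⟨ψ_i| = ρ of Σ p_i F_Q[|ψ_i⟩;H], and the pure-state continuity bound |F_Q[|ψ⟩;H] − F_Q[|φ⟩;H]| ≤ 24√(1−|⟨ψ|φ⟩|²)‖H‖² holds, then for any mixed ρ and pure |φ⟩: |F_Q[ρ;H] − F_Q[|φ⟩;H]| ≤ 24·√(1 − F(ρ,|φ⟩)²)·‖H‖², where F(ρ,|φ⟩)² = ⟨φ|ρ|φ⟩. -/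

import Mathlib

/-! For any ensemble `{p_k, ψ_k}` of `ρ`, the pure-state bound puts `∑ p_k F_Q[ψ_k]` within
`24‖H‖² ∑ p_k √(1 - |⟨ψ_k|φ⟩|²)` of `F_Q[φ]`. Concavity of `√` and `∑ p_k |⟨ψ_k|φ⟩|² = ⟨φ|ρ|φ⟩` bound
this by `24‖H‖² √(1 - ⟨φ|ρ|φ⟩)`. The estimate is uniform in the ensemble, so it passes to the
infimum, and the spectral decomposition of `ρ` shows that the infimum is over a nonempty set. -/

open scoped BigOperators ComplexConjugate ComplexOrder Matrix

noncomputable section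

/-- The rank-one projector `|ψ⟩⟨ψ|` as a matrix. -/
def projv {ι : Type*} [Fintype ι] (ψ : ι → ℂ) : Matrix ι ι ℂ :=
  Matrix.vecMulVec ψ (star ψ)

/-- The inner product `⟨ψ|φ⟩`. -/
def ipc {ι : Type*} [Fintype ι] (ψ φ : ι → ℂ) : ℂ :=
  dotProduct (star ψ) φ

-- Square root of a positive semidefinite matrix (junk value `0` otherwise).
open Classical in
def msqrt {ι : Type*} [Fintype ι] [DecidableEq ι] (A : Matrix ι ι ℂ) : Matrix ι ι ℂ :=
  if h : A.PosSemidef then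
    (h.1.eigenvectorUnitary : Matrix ι ι ℂ) *
      Matrix.diagonal ((↑) ∘ (Real.sqrt ·) ∘ h.1.eigenvalues) *
      (star h.1.eigenvectorUnitary : Matrix ι ι ℂ)
  else 0

/-- Trace norm `‖X‖₁ = Tr √(X†X)`. -/
def traceNorm {ι : Type*} [Fintype ι] [DecidableEq ι] (A : Matrix ι ι ℂ) : ℝ :=
  (msqrt (Aᴴ * A)).trace.re

/-- Uhlmann fidelity `F(ρ,σ) = Tr √(√σ ρ √σ)`. -/
def fid {ι : Type*} [Fintype ι] [DecidableEq ι] (ρ σ : Matrix ι ι ℂ) : ℝ :=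
  (msqrt (msqrt σ * ρ * msqrt σ)).trace.re

/-- Operator (spectral) norm of a matrix. -/
def opNorm {ι : Type*} [Fintype ι] [DecidableEq ι] (A : Matrix ι ι ℂ) : ℝ :=
  ‖Matrix.toEuclideanCLM (𝕜 := ℂ) A‖

/-- Expectation value `⟨ψ|H|ψ⟩` (real part). -/
def exval {ι : Type*} [Fintype ι] (ψ : ι → ℂ) (H : Matrix ι ι ℂ) : ℝ :=
  (ipc ψ (H.mulVec ψ)).re

/-- Pure-state quantum Fisher information `4(⟨H²⟩ - ⟨H⟩²)`. -/
def QFIpure {ι : Type*} [Fintype ι] (ψ : ι → ℂ) (H : Matrix ι ι ℂ) : ℝ :=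
  4 * (exval ψ (H * H) - (exval ψ H) ^ 2)

/-- Density matrix predicate. -/
def IsDensity {ι : Type*} [Fintype ι] [DecidableEq ι] (ρ : Matrix ι ι ℂ) : Prop :=
  ρ.PosSemidef ∧ ρ.trace = 1

/-- Convex-roof quantum Fisher information of a mixed state. -/
def roofQFI {ι : Type*} [Fintype ι] [DecidableEq ι] (ρ H : Matrix ι ι ℂ) : ℝ :=
  sInf {x : ℝ | ∃ (m : ℕ) (p : Fin m → ℝ) (ψ : Fin m → ι → ℂ),
    (∀ i, 0 ≤ p i) ∧ (∀ i, ipc (ψ i) (ψ i) = 1) ∧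
    (∑ i, (p i : ℂ) • projv (ψ i)) = ρ ∧ x = ∑ i, p i * QFIpure (ψ i) H}

lemma sum_mul_sqrt_le_sqrt_sum_mul {κ : Type*} (s : Finset κ) {w x : κ → ℝ} (hw : ∀ k ∈ s, 0 ≤ w k)
    (hw1 : ∑ k ∈ s, w k = 1) (hx : ∀ k ∈ s, 0 ≤ x k) :
    ∑ k ∈ s, w k * √(x k) ≤ √(∑ k ∈ s, w k * x k) :=
  Real.strictConcaveOn_sqrt.concaveOn.le_map_sum hw hw1 hx

lemma abs_csInf_sub_le {S : Set ℝ} (hS : S.Nonempty) {c B : ℝ} (h : ∀ x ∈ S, |x - c| ≤ B) :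
    |sInf S - c| ≤ B := by
  obtain ⟨x, hx⟩ := hS
  refine abs_le.mpr ⟨?_, ?_⟩
  · have : c - B ≤ sInf S := le_csInf ⟨x, hx⟩ fun y hy => by linarith [(abs_le.mp (h y hy)).1]
    linarith
  · have : sInf S ≤ x := csInf_le ⟨c - B, fun y hy => by linarith [(abs_le.mp (h y hy)).1]⟩ hx
    linarith [(abs_le.mp (h x hx)).2]

section Ensembles

variable {ι : Type*} [Fintype ι]

lemma ipc_eq_inner (ψ φ : ι → ℂ) :
    ipc ψ φ = inner ℂ (WithLp.toLp 2 ψ) (WithLp.toLp 2 φ) := by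
  rw [EuclideanSpace.inner_eq_star_dotProduct, dotProduct_comm]; rfl

lemma norm_toLp_eq_one {ψ : ι → ℂ} (hψ : ipc ψ ψ = 1) : ‖WithLp.toLp 2 ψ‖ = 1 := by
  have hsq : ‖WithLp.toLp 2 ψ‖ ^ 2 = 1 := by
    rw [← inner_self_eq_norm_sq (𝕜 := ℂ), ← ipc_eq_inner, hψ, RCLike.one_re]
  exact (pow_eq_one_iff_of_nonneg (norm_nonneg _) two_ne_zero).mp hsq

lemma norm_ipc_le_one {ψ φ : ι → ℂ} (hψ : ipc ψ ψ = 1) (hφ : ipc φ φ = 1) :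
    ‖ipc ψ φ‖ ≤ 1 := by
  rw [ipc_eq_inner]
  simpa [norm_toLp_eq_one hψ, norm_toLp_eq_one hφ] using
    norm_inner_le_norm (𝕜 := ℂ) (WithLp.toLp 2 ψ) (WithLp.toLp 2 φ)

lemma trace_projv (ψ : ι → ℂ) : (projv ψ).trace = ipc ψ ψ := by
  rw [projv, Matrix.trace_vecMulVec, ipc, dotProduct_comm]

lemma ipc_mulVec_projv (ψ φ : ι → ℂ) :
    ipc φ (projv ψ *ᵥ φ) = (‖ipc ψ φ‖ ^ 2 : ℝ) := by
  rw [projv, Matrix.vecMulVec_mulVec]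
  simp only [ipc, dotProduct_smul, op_smul_eq_mul, Matrix.star_dotProduct φ ψ]
  rw [mul_comm, Complex.ofReal_pow]
  exact Complex.mul_conj' _

variable {κ : Type*} [Fintype κ]

lemma ipc_mulVec_sum_smul_projv (p : κ → ℝ) (ψ : κ → ι → ℂ) (φ : ι → ℂ) :
    ipc φ ((∑ k, (p k : ℂ) • projv (ψ k)) *ᵥ φ) = (∑ k, p k * ‖ipc (ψ k) φ‖ ^ 2 : ℝ) := by
  rw [Matrix.sum_mulVec, ipc, dotProduct_sum]
  push_cast
  refine Finset.sum_congr rfl fun k _ => ?_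
  rw [Matrix.smul_mulVec, dotProduct_smul, ← ipc, ipc_mulVec_projv, smul_eq_mul]
  push_cast
  rfl

lemma sum_eq_one_of_sum_smul_projv_eq {ρ : Matrix ι ι ℂ} (hρ : ρ.trace = 1) {p : κ → ℝ}
    {ψ : κ → ι → ℂ} (hψ : ∀ k, ipc (ψ k) (ψ k) = 1) (hens : ∑ k, (p k : ℂ) • projv (ψ k) = ρ) :
    ∑ k, p k = 1 := by
  have htr := congrArg Matrix.trace hens
  simp only [Matrix.trace_sum, Matrix.trace_smul, trace_projv, hψ, smul_eq_mul, mul_one, hρ] at htr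
  exact_mod_cast htr

theorem abs_sum_mul_sub_le_of_continuity {ρ : Matrix ι ι ℂ} (hρ : ρ.trace = 1)
    (f : (ι → ℂ) → ℝ) {C : ℝ} (hC : 0 ≤ C)
    (hf : ∀ ψ χ, ipc ψ ψ = 1 → ipc χ χ = 1 → |f ψ - f χ| ≤ C * √(1 - ‖ipc ψ χ‖ ^ 2))
    {φ : ι → ℂ} (hφ : ipc φ φ = 1) {p : κ → ℝ} {ψ : κ → ι → ℂ} (hp : ∀ k, 0 ≤ p k)
    (hψ : ∀ k, ipc (ψ k) (ψ k) = 1) (hens : ∑ k, (p k : ℂ) • projv (ψ k) = ρ) :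
    |∑ k, p k * f (ψ k) - f φ| ≤ C * √(1 - (ipc φ (ρ *ᵥ φ)).re) := by
  have hp1 := sum_eq_one_of_sum_smul_projv_eq hρ hψ hens
  have hexp : (ipc φ (ρ *ᵥ φ)).re = ∑ k, p k * ‖ipc (ψ k) φ‖ ^ 2 := by
    rw [← hens, ipc_mulVec_sum_smul_projv, Complex.ofReal_re]
  have hfid : ∀ k, 0 ≤ 1 - ‖ipc (ψ k) φ‖ ^ 2 := fun k => by
    nlinarith [norm_ipc_le_one (hψ k) hφ, norm_nonneg (ipc (ψ k) φ)]
  calc |∑ k, p k * f (ψ k) - f φ| = |∑ k, p k * (f (ψ k) - f φ)| := by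
        simp only [mul_sub, Finset.sum_sub_distrib, ← Finset.sum_mul, hp1, one_mul]
    _ ≤ ∑ k, p k * |f (ψ k) - f φ| := by
        refine (Finset.abs_sum_le_sum_abs _ _).trans_eq (Finset.sum_congr rfl fun k _ => ?_)
        rw [abs_mul, abs_of_nonneg (hp k)]
    _ ≤ ∑ k, p k * (C * √(1 - ‖ipc (ψ k) φ‖ ^ 2)) := by
        gcongr with k
        · exact hp k
        · exact hf _ _ (hψ k) hφ
    _ = C * ∑ k, p k * √(1 - ‖ipc (ψ k) φ‖ ^ 2) := by
        rw [Finset.mul_sum]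
        exact Finset.sum_congr rfl fun k _ => by ring
    _ ≤ C * √(∑ k, p k * (1 - ‖ipc (ψ k) φ‖ ^ 2)) := by
        gcongr
        exact sum_mul_sqrt_le_sqrt_sum_mul _ (fun k _ => hp k) hp1 (fun k _ => hfid k)
    _ = C * √(1 - (ipc φ (ρ *ᵥ φ)).re) := by
        simp only [hexp, mul_sub, mul_one, Finset.sum_sub_distrib, hp1]

lemma Matrix.IsHermitian.sum_eigenvalues_smul_projv [DecidableEq ι] {A : Matrix ι ι ℂ}
    (hA : A.IsHermitian) : ∑ i, (hA.eigenvalues i : ℂ) • projv (hA.eigenvectorBasis i) = A := by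
  conv_rhs => rw [hA.spectral_theorem, Unitary.conjStarAlgAut_apply]
  ext a b
  rw [Matrix.sum_apply, Matrix.mul_apply]
  refine Finset.sum_congr rfl fun k _ => ?_
  simp only [Matrix.smul_apply, projv, Matrix.vecMulVec_apply, Pi.star_apply, smul_eq_mul,
    Matrix.mul_diagonal, Matrix.star_apply, Matrix.IsHermitian.eigenvectorUnitary_apply,
    Function.comp_apply, RCLike.star_def, RCLike.ofReal_eq_complex_ofReal]
  ring

lemma abs_roofQFI_sub_le [DecidableEq ι] {ρ : Matrix ι ι ℂ} (hρ : ρ.PosSemidef)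
    (H : Matrix ι ι ℂ) {c B : ℝ}
    (h : ∀ (m : ℕ) (p : Fin m → ℝ) (ψ : Fin m → ι → ℂ), (∀ i, 0 ≤ p i) →
      (∀ i, ipc (ψ i) (ψ i) = 1) → ∑ i, (p i : ℂ) • projv (ψ i) = ρ →
      |∑ i, p i * QFIpure (ψ i) H - c| ≤ B) :
    |roofQFI ρ H - c| ≤ B := by
  refine abs_csInf_sub_le ?_ ?_
  · let e := Fintype.equivFin ι
    refine ⟨_, Fintype.card ι, fun i => hρ.1.eigenvalues (e.symm i),
      fun i => hρ.1.eigenvectorBasis (e.symm i), fun i => hρ.eigenvalues_nonneg _,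
      fun i => ?_, ?_, rfl⟩
    · rw [ipc_eq_inner, WithLp.toLp_ofLp, inner_self_eq_norm_sq_to_K,
        hρ.1.eigenvectorBasis.orthonormal.1]
      norm_num
    · exact (e.symm.sum_comp fun i => (hρ.1.eigenvalues i : ℂ) • projv
        (hρ.1.eigenvectorBasis i)).trans hρ.1.sum_eigenvalues_smul_projv
  · rintro _ ⟨m, p, ψ, hp, hψ, hens, rfl⟩
    exact h m p ψ hp hψ hens

end Ensembles

theorem roofQFI_continuity_pure_general {n : ℕ} (ρ : Matrix (Fin n) (Fin n) ℂ) (hρ : IsDensity ρ)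
    (H : Matrix (Fin n) (Fin n) ℂ)
    (φ : Fin n → ℂ) (hφ : ipc φ φ = 1)
    (hcont : ∀ ψ χ : Fin n → ℂ, ipc ψ ψ = 1 → ipc χ χ = 1 →
      |QFIpure ψ H - QFIpure χ H| ≤ 24 * Real.sqrt (1 - ‖ipc ψ χ‖ ^ 2) * opNorm H ^ 2) :
    |roofQFI ρ H - QFIpure φ H| ≤
      24 * Real.sqrt (1 - (ipc φ (ρ.mulVec φ)).re) * opNorm H ^ 2 := by
  refine abs_roofQFI_sub_le hρ.1 H fun m p ψ hp hψ hens => ?_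
  have hC : 0 ≤ 24 * opNorm H ^ 2 := by positivity
  calc |∑ i, p i * QFIpure (ψ i) H - QFIpure φ H|
      ≤ 24 * opNorm H ^ 2 * √(1 - (ipc φ (ρ *ᵥ φ)).re) :=
        abs_sum_mul_sub_le_of_continuity hρ.2 (QFIpure · H) hC
          (fun ψ χ hψ hχ => (hcont ψ χ hψ hχ).trans_eq (by ring)) hφ hp hψ hens
    _ = 24 * √(1 - (ipc φ (ρ *ᵥ φ)).re) * opNorm H ^ 2 := by ring

/-- the convex-roof QFI of a mixed state is continuous with respect to a
pure state: `|F_Q[ρ;H] − F_Q[φ;H]| ≤ 24√(1 − ⟨φ|ρ|φ⟩)‖H‖²`, given the pure-state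
continuity bound. -/
theorem roofQFI_continuity_pure {n : ℕ} (ρ : Matrix (Fin n) (Fin n) ℂ) (hρ : IsDensity ρ)
    (H : Matrix (Fin n) (Fin n) ℂ) (hH : H.IsHermitian)
    (φ : Fin n → ℂ) (hφ : ipc φ φ = 1)
    (hcont : ∀ ψ χ : Fin n → ℂ, ipc ψ ψ = 1 → ipc χ χ = 1 →
      |QFIpure ψ H - QFIpure χ H| ≤ 24 * Real.sqrt (1 - ‖ipc ψ χ‖ ^ 2) * opNorm H ^ 2) :
    |roofQFI ρ H - QFIpure φ H| ≤
      24 * Real.sqrt (1 - (ipc φ (ρ.mulVec φ)).re) * opNorm H ^ 2 :=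
  roofQFI_continuity_pure_general ρ hρ H φ hφ hcont
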